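/- arXiv:2512.21434 — 2 statements merged into one kernel-verified Lean document; each statement's English description precedes it below -/
import Mathlib

section
/- Let X ∈ ℝ^{D×n} with r = rank(X), let β₁, …, β_r > 0 be the strictly positive eigenvalues of XᵀX, let P ∈ ℝ^{n×r} be a matrix whose columns are corresponding orthonormal eigenvectors of XᵀX, and for λ ∈ [0,1] let C*(λ) = (XᵀX + λI_n)⁻¹(XᵀX). If λ is a random variable uniformly distributed on [0,1], then for every δ > 0 the probability that ‖C*(λ) − PPᵀ‖_F² ≥ δ is at most (1/δ)·Σ_{i=1}^r g(β_i), where g(β) = (2β+1)/(β+1) + 2β·ln(β/(β+1)). Equivalently, the Lebesgue measure of the set {λ ∈ (0,1] : ‖C*(λ) − PPᵀ‖_F² ≥ δ} is at most (1/δ)·Σ_{i=1}^r g(β_i). -/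
open Matrix MeasureTheory

/-- Squared Frobenius norm of a real matrix. -/
def frobSq {I J : Type*} [Fintype I] [Fintype J] (A : Matrix I J ℝ) : ℝ :=
  ∑ i, ∑ j, (A i j) ^ 2

/-!
Since `rank (XᵀX) = r`, the orthonormal eigenvectors in `P` span the range of `XᵀX`, so
`XᵀX = P diag(β) Pᵀ`. Hence `C*(λ) = P diag(βᵢ / (βᵢ + λ)) Pᵀ`, and
`C*(λ) − PPᵀ = −P diag(λ / (βᵢ + λ)) Pᵀ` has squared Frobenius norm `Σᵢ (λ / (βᵢ + λ))²`.
Markov's inequality bounds the measure of the set by `1/δ` times the integral of this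
function over `(0, 1]`, and `∫₀¹ (λ / (β + λ))² dλ = g(β)`.
-/

namespace Matrix

variable {K : Type*} [Field K] {m ι : Type*} [Fintype m] [Fintype ι] [DecidableEq ι]
  {P : Matrix m ι K}

theorem rank_eq_card_width_of_transpose_mul_eq_one (hP : Pᵀ * P = 1) :
    P.rank = Fintype.card ι :=
  le_antisymm P.rank_le_card_width <| calc
    Fintype.card ι = (Pᵀ * P).rank := by rw [hP, rank_one]
    _ ≤ P.rank := rank_mul_le_right _ _

theorem mul_diagonal_mul_transpose_mul_mul_diagonal_mul_transpose (hP : Pᵀ * P = 1)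
    (a b : ι → K) :
    P * diagonal a * Pᵀ * (P * diagonal b * Pᵀ) = P * diagonal (a * b) * Pᵀ := by
  calc P * diagonal a * Pᵀ * (P * diagonal b * Pᵀ)
      = P * (diagonal a * (Pᵀ * P) * diagonal b) * Pᵀ := by simp only [Matrix.mul_assoc]
    _ = P * diagonal (a * b) * Pᵀ := by rw [hP, Matrix.mul_one, diagonal_mul_diagonal]; rfl

/- The range of `M` contains that of `M * P = P * diagonal β`, which has the same rank; so
`P * Pᵀ`, which fixes the columns of `P`, fixes `M`, and `M = P * (M * P)ᵀ` by symmetry. -/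
theorem eq_mul_diagonal_mul_transpose_of_rank_eq [DecidableEq m] {M : Matrix m m K}
    (hM : Mᵀ = M) (hP : Pᵀ * P = 1) {β : ι → K} (hβ : ∀ i, β i ≠ 0)
    (heig : M * P = P * diagonal β) (hrank : M.rank = Fintype.card ι) :
    M = P * diagonal β * Pᵀ := by
  have hrankMP : (M * P).rank = M.rank := by
    rw [hrank, heig, rank_mul_eq_left_of_isUnit_det _ _ (by simp [det_diagonal,
      Finset.prod_ne_zero_iff, hβ]), rank_eq_card_width_of_transpose_mul_eq_one hP]
  have hrange : LinearMap.range (M * P).mulVecLin = LinearMap.range M.mulVecLin :=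
    Submodule.eq_of_le_of_finrank_eq
      (by rw [mulVecLin_mul]; exact LinearMap.range_comp_le_range _ _) hrankMP
  have hproj : P * Pᵀ * M = M := by
    refine toLin'.injective (LinearMap.ext fun v => ?_)
    obtain ⟨w, hw⟩ : M *ᵥ v ∈ LinearMap.range (M * P).mulVecLin := hrange ▸ ⟨v, rfl⟩
    simp only [toLin'_apply, ← mulVec_mulVec, ← hw, mulVecLin_apply, heig]
    simp only [mulVec_mulVec, ← Matrix.mul_assoc, hP, Matrix.mul_one]
  calc M = P * (M * P)ᵀ := by rw [transpose_mul, hM, ← Matrix.mul_assoc, hproj]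
    _ = P * diagonal β * Pᵀ := by rw [heig, transpose_mul, diagonal_transpose, Matrix.mul_assoc]

theorem inv_mul_diagonal_mul_transpose_add_smul_one_mul [DecidableEq m] (hP : Pᵀ * P = 1)
    {β : ι → K} {c : K} (hunit : IsUnit (P * diagonal β * Pᵀ + c • 1).det)
    (hβc : ∀ i, β i + c ≠ 0) :
    (P * diagonal β * Pᵀ + c • 1)⁻¹ * (P * diagonal β * Pᵀ)
      = P * diagonal (fun i => β i / (β i + c)) * Pᵀ := by
  have hres : (P * diagonal β * Pᵀ + c • 1) * (P * diagonal (fun i => β i / (β i + c)) * Pᵀ)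
      = P * diagonal β * Pᵀ := by
    rw [add_mul, mul_diagonal_mul_transpose_mul_mul_diagonal_mul_transpose hP, Matrix.smul_mul,
      Matrix.one_mul, ← Matrix.smul_mul, ← Matrix.mul_smul, ← diagonal_smul, ← Matrix.add_mul,
      ← Matrix.mul_add, diagonal_add]
    congr 3 with i
    simp only [Pi.mul_apply, Pi.smul_apply, smul_eq_mul]
    field_simp [hβc i]
  rw [← nonsing_inv_mul_cancel_left _ (P * diagonal (fun i => β i / (β i + c)) * Pᵀ) hunit,
    hres]

theorem isUnit_det_transpose_mul_self_add_smul_one {n : Type*} [Fintype n] [DecidableEq n]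
    (X : Matrix m n ℝ) {c : ℝ} (hc : 0 < c) :
    IsUnit (Xᵀ * X + c • 1).det := by
  have hpos : (Xᵀ * X + c • (1 : Matrix n n ℝ)).PosDef := by
    simpa [conjTranspose_eq_transpose_of_trivial] using
      PosDef.posSemidef_add (posSemidef_conjTranspose_mul_self X) (PosDef.one.smul hc)
  exact (isUnit_iff_isUnit_det _).mp hpos.isUnit

end Matrix

theorem frobSq_eq_trace {I J : Type*} [Fintype I] [Fintype J] (A : Matrix I J ℝ) :
    frobSq A = (Aᵀ * A).trace := by
  simp only [frobSq, trace, diag, mul_apply, transpose_apply, pow_two]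
  exact Finset.sum_comm

section Spectral

variable {n ι : Type*} [Fintype n] [Fintype ι] [DecidableEq ι] {P : Matrix n ι ℝ}

theorem frobSq_mul_diagonal_mul_transpose (hP : Pᵀ * P = 1) (g : ι → ℝ) :
    frobSq (P * diagonal g * Pᵀ) = ∑ i, g i ^ 2 := by
  have hsymm : (P * diagonal g * Pᵀ)ᵀ = P * diagonal g * Pᵀ := by
    simp [transpose_mul, Matrix.mul_assoc]
  rw [frobSq_eq_trace, hsymm, mul_diagonal_mul_transpose_mul_mul_diagonal_mul_transpose hP,
    trace_mul_cycle, hP, Matrix.one_mul, trace_diagonal]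
  simp [pow_two]

theorem frobSq_inv_transpose_mul_self_add_smul_one_mul_sub {m : Type*} [Fintype m]
    [DecidableEq n] {X : Matrix m n ℝ}
    (hP : Pᵀ * P = 1) {β : ι → ℝ} (hβ : ∀ i, 0 ≤ β i) (hX : Xᵀ * X = P * diagonal β * Pᵀ)
    {c : ℝ} (hc : 0 < c) :
    frobSq ((Xᵀ * X + c • 1)⁻¹ * (Xᵀ * X) - P * Pᵀ) = ∑ i, (c / (β i + c)) ^ 2 := by
  have hβc : ∀ i, β i + c ≠ 0 := fun i => (add_pos_of_nonneg_of_pos (hβ i) hc).ne'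
  have hunit := X.isUnit_det_transpose_mul_self_add_smul_one hc
  have hproj : P * Pᵀ = P * diagonal (fun _ : ι => (1 : ℝ)) * Pᵀ := by
    rw [diagonal_one, Matrix.mul_one]
  rw [hX] at hunit ⊢
  rw [inv_mul_diagonal_mul_transpose_add_smul_one_mul hP hunit hβc, hproj, ← Matrix.sub_mul,
    ← Matrix.mul_sub, diagonal_sub, frobSq_mul_diagonal_mul_transpose hP]
  refine Finset.sum_congr rfl fun i _ => ?_
  rw [div_sub_one (hβc i), sub_add_cancel_left, neg_div, neg_sq]

end Spectral

theorem continuousOn_div_add_sq {b : ℝ} (hb : 0 < b) :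
    ContinuousOn (fun l : ℝ => (l / (b + l)) ^ 2) (Set.Ici 0) :=
  (continuousOn_id.div (continuousOn_const.add continuousOn_id)
    fun l (hl : 0 ≤ l) => (add_pos_of_pos_of_nonneg hb hl).ne').pow 2

theorem integral_div_add_sq {b : ℝ} (hb : 0 < b) :
    ∫ l in (0 : ℝ)..1, (l / (b + l)) ^ 2
      = (2 * b + 1) / (b + 1) + 2 * b * Real.log (b / (b + 1)) := by
  have hderiv : ∀ l ∈ Set.uIcc (0 : ℝ) 1,
      HasDerivAt (fun t => t - 2 * b * Real.log (b + t) - b ^ 2 / (b + t))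
        ((l / (b + l)) ^ 2) l := by
    intro l hl
    rw [Set.uIcc_of_le zero_le_one] at hl
    have hbl : b + l ≠ 0 := (add_pos_of_pos_of_nonneg hb hl.1).ne'
    have hlin : HasDerivAt (fun t : ℝ => b + t) 1 l := (hasDerivAt_id l).const_add b
    refine (((hasDerivAt_id' l).fun_sub ((hlin.log hbl).const_mul (2 * b))).fun_sub
      ((hasDerivAt_const l (b ^ 2)).fun_div hlin hbl)).congr_deriv ?_
    field_simp
    ring
  have hint : IntervalIntegrable (fun l : ℝ => (l / (b + l)) ^ 2) volume 0 1 :=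
    ((continuousOn_div_add_sq hb).mono Set.Icc_subset_Ici_self).intervalIntegrable_of_Icc
      zero_le_one
  rw [intervalIntegral.integral_eq_sub_of_hasDerivAt hderiv hint,
    Real.log_div hb.ne' (by positivity : b + 1 ≠ 0), add_zero]
  field_simp
  ring

theorem measure_setOf_mem_and_le_le {α : Type*} [MeasurableSpace α] {μ : Measure α}
    {s : Set α} (hs : MeasurableSet s) (hμs : μ s ≠ ⊤) {f : α → ℝ} (hf0 : ∀ x ∈ s, 0 ≤ f x)
    (hf : IntegrableOn f s μ) {δ : ℝ} (hδ : 0 < δ) :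
    μ {x | x ∈ s ∧ δ ≤ f x} ≤ ENNReal.ofReal ((1 / δ) * ∫ x in s, f x ∂μ) := by
  have : IsFiniteMeasure (μ.restrict s) := isFiniteMeasure_restrict.mpr hμs
  have hmarkov := mul_meas_ge_le_integral_of_nonneg (ae_restrict_of_forall_mem hs hf0) hf δ
  have hset : μ {x | x ∈ s ∧ δ ≤ f x} = μ.restrict s {x | δ ≤ f x} := by
    rw [Measure.restrict_apply' hs, Set.inter_comm]
    rfl
  rw [hset, ← ofReal_measureReal]
  gcongr
  rw [one_div, ← div_eq_inv_mul, le_div_iff₀ hδ, mul_comm]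
  exact hmarkov

/-- Let `r = rank X`, `β₁,…,β_r > 0` the strictly positive eigenvalues of `XᵀX`, and
`P ∈ ℝ^{n×r}` a matrix of corresponding orthonormal eigenvectors. For `λ` uniformly
distributed on `[0,1]` and `C*(λ) = (XᵀX + λI)⁻¹(XᵀX)`, the probability that
`‖C*(λ) − PPᵀ‖_F² ≥ δ` is at most `(1/δ)·Σᵢ g(βᵢ)` with
`g(β) = (2β+1)/(β+1) + 2β·ln(β/(β+1))`; equivalently, the Lebesgue measure of
`{λ ∈ (0,1] : ‖C*(λ) − PPᵀ‖_F² ≥ δ}` is at most this bound. -/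
theorem tail_bound_lowrank_approx
    (D n : ℕ) (X : Matrix (Fin D) (Fin n) ℝ)
    (r : ℕ) (hr : r = X.rank)
    (β : Fin r → ℝ) (hβ : ∀ i, 0 < β i)
    (P : Matrix (Fin n) (Fin r) ℝ) (hP : Pᵀ * P = 1)
    (heig : (Xᵀ * X) * P = P * Matrix.diagonal β)
    (δ : ℝ) (hδ : 0 < δ) :
    volume {lam : ℝ | lam ∈ Set.Ioc (0 : ℝ) 1 ∧
        δ ≤ frobSq ((Xᵀ * X + lam • (1 : Matrix (Fin n) (Fin n) ℝ))⁻¹ * (Xᵀ * X) - P * Pᵀ)} ≤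
      ENNReal.ofReal ((1 / δ) *
        ∑ i, ((2 * β i + 1) / (β i + 1) + 2 * β i * Real.log (β i / (β i + 1)))) := by
  have hX : Xᵀ * X = P * diagonal β * Pᵀ :=
    eq_mul_diagonal_mul_transpose_of_rank_eq (by rw [transpose_mul, transpose_transpose]) hP
      (fun i => (hβ i).ne') heig (by rw [rank_transpose_mul_self, ← hr, Fintype.card_fin])
  have hset : {lam : ℝ | lam ∈ Set.Ioc (0 : ℝ) 1 ∧
        δ ≤ frobSq ((Xᵀ * X + lam • (1 : Matrix (Fin n) (Fin n) ℝ))⁻¹ * (Xᵀ * X) - P * Pᵀ)}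
      = {lam | lam ∈ Set.Ioc (0 : ℝ) 1 ∧ δ ≤ ∑ i, (lam / (β i + lam)) ^ 2} := by
    ext lam
    refine and_congr_right fun hlam => ?_
    rw [frobSq_inv_transpose_mul_self_add_smul_one_mul_sub hP (fun i => (hβ i).le) hX hlam.1]
  have hcont (i : Fin r) : ContinuousOn (fun l : ℝ => (l / (β i + l)) ^ 2) (Set.Icc 0 1) :=
    (continuousOn_div_add_sq (hβ i)).mono Set.Icc_subset_Ici_self
  have hint : ∫ l in Set.Ioc (0 : ℝ) 1, ∑ i, (l / (β i + l)) ^ 2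
      = ∑ i, ((2 * β i + 1) / (β i + 1) + 2 * β i * Real.log (β i / (β i + 1))) := by
    rw [← intervalIntegral.integral_of_le zero_le_one, intervalIntegral.integral_finsetSum
      fun i _ => (hcont i).intervalIntegrable_of_Icc zero_le_one]
    exact Finset.sum_congr rfl fun i _ => integral_div_add_sq (hβ i)
  rw [hset, ← hint]
  exact measure_setOf_mem_and_le_le measurableSet_Ioc measure_Ioc_lt_top.ne
    (fun l _ => Finset.sum_nonneg fun i _ => sq_nonneg _)
    (integrable_finsetSum _ fun i _ => (hcont i).integrableOn_Icc.mono_set Set.Ioc_subset_Icc_self)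
    hδ
end

section
/- Let Z ∈ ℝ^{d×n} and let M ∈ ℝ^{n×m} with m ≤ min(d, n). For every P ∈ ℝ^{n×m} with PᵀP = I_m, tr(PᵀM) ≤ Σ_{i=1}^m σ_i(M), where σ₁(M) ≥ ⋯ ≥ σ_m(M) are the m largest singular values of M. -/
/-!
Substituting the SVD and cycling the trace gives `tr(PᵀM) = ∑ᵢ (QᵀU)ᵢᵢ σᵢ` with `Q = PV`,
which again has orthonormal columns. Each `(QᵀU)ᵢᵢ` is the inner product of two unit
vectors, hence at most `1` by Cauchy–Schwarz, and `σ ≥ 0` finishes the bound.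
-/

open Matrix

namespace Matrix

variable {ι κ : Type*} [Fintype ι] [DecidableEq κ]

lemma trace_mul_diagonal {R : Type*} [NonUnitalNonAssocSemiring R] [Fintype κ]
    (C : Matrix κ κ R) (σ : κ → R) :
    trace (C * diagonal σ) = ∑ i, C i i * σ i := by
  simp only [trace, diag_apply, mul_diagonal]

lemma sum_sq_col_eq_one {A : Matrix ι κ ℝ} (hA : Aᵀ * A = 1) (i : κ) :
    ∑ k, A k i ^ 2 = 1 := by
  simpa [mul_apply, sq] using congrFun (congrFun hA i) i

lemma transpose_mul_apply_le_one {A B : Matrix ι κ ℝ} (hA : Aᵀ * A = 1) (hB : Bᵀ * B = 1)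
    (i j : κ) : (Aᵀ * B) i j ≤ 1 := by
  have hCS := Finset.sum_mul_sq_le_sq_mul_sq Finset.univ (fun k => A k i) (fun k => B k j)
  rw [sum_sq_col_eq_one hA, sum_sq_col_eq_one hB, one_mul] at hCS
  simp only [mul_apply, transpose_apply]
  exact le_of_sq_le_sq (by simpa using hCS) zero_le_one

lemma transpose_mul_self_mul_eq_one [Fintype κ] {P : Matrix ι κ ℝ} {V : Matrix κ κ ℝ}
    (hP : Pᵀ * P = 1) (hV : Vᵀ * V = 1) : (P * V)ᵀ * (P * V) = 1 := by
  rw [transpose_mul, Matrix.mul_assoc, ← Matrix.mul_assoc Pᵀ, hP, Matrix.one_mul, hV]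

end Matrix

theorem trace_le_sum_singular_values_general
    (n m : ℕ)
    (M : Matrix (Fin n) (Fin m) ℝ)
    (U : Matrix (Fin n) (Fin m) ℝ) (V : Matrix (Fin m) (Fin m) ℝ) (σ : Fin m → ℝ)
    (hU : Uᵀ * U = 1) (hV₁ : Vᵀ * V = 1) (hσ : ∀ i, 0 ≤ σ i)
    (hSVD : M = U * Matrix.diagonal σ * Vᵀ) :
    ∀ P : Matrix (Fin n) (Fin m) ℝ, Pᵀ * P = 1 →
      Matrix.trace (Pᵀ * M) ≤ ∑ i, σ i := by
  intro P hP
  have hPV := transpose_mul_self_mul_eq_one hP hV₁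
  calc trace (Pᵀ * M) = trace (Vᵀ * (Pᵀ * U * diagonal σ)) := by
        rw [hSVD, ← Matrix.mul_assoc, ← Matrix.mul_assoc, trace_mul_comm]
    _ = trace ((P * V)ᵀ * U * diagonal σ) := by
        simp only [transpose_mul, Matrix.mul_assoc]
    _ = ∑ i, ((P * V)ᵀ * U) i i * σ i := trace_mul_diagonal _ σ
    _ ≤ ∑ i, σ i := Finset.sum_le_sum fun i _ =>
        mul_le_of_le_one_left (hσ i) (transpose_mul_apply_le_one hPV hU i i)

/-- Trace–singular value inequality: if `M ∈ ℝ^{n×m}` (`m ≤ min(d,n)`) has a thin SVD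
`M = U·diag(σ)·Vᵀ` (`UᵀU = I_m`, `V` orthogonal `m×m`, `σ ≥ 0`, so the `σᵢ` are the
singular values of `M`), then for every `P ∈ ℝ^{n×m}` with `PᵀP = I_m`,
`tr(PᵀM) ≤ Σ_{i=1}^m σᵢ`. -/
theorem trace_le_sum_singular_values
    (d n m : ℕ) (hmd : m ≤ d) (hmn : m ≤ n)
    (Z : Matrix (Fin d) (Fin n) ℝ)
    (M : Matrix (Fin n) (Fin m) ℝ)
    (U : Matrix (Fin n) (Fin m) ℝ) (V : Matrix (Fin m) (Fin m) ℝ) (σ : Fin m → ℝ)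
    (hU : Uᵀ * U = 1) (hV₁ : Vᵀ * V = 1) (hV₂ : V * Vᵀ = 1) (hσ : ∀ i, 0 ≤ σ i)
    (hSVD : M = U * Matrix.diagonal σ * Vᵀ) :
    ∀ P : Matrix (Fin n) (Fin m) ℝ, Pᵀ * P = 1 →
      Matrix.trace (Pᵀ * M) ≤ ∑ i, σ i :=
  trace_le_sum_singular_values_general n m M U V σ hU hV₁ hσ hSVD
end
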